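/- arXiv:0809.4386 — 3 statements merged into one kernel-verified Lean document; each statement's English description precedes it below -/
import Mathlib

section
/- Free groups of finite rank are Hopfian: if F is a free group on a finite set A and φ : F → F is a surjective group homomorphism, then φ is an isomorphism. -/
/-!
Mal'cev: a finitely generated residually finite group `G` is Hopfian. If `f` is surjective and
`f g = 1 ≠ g`, choose a finite quotient `π : G → Q` with `π g ≠ 1`. Precomposition with `f` is
an injective self-map of the finite set `Hom(G, Q)`, hence surjective, so `π = ψ ∘ f` and
`π g = ψ (f g) = 1`, a contradiction.

Free groups are residually finite: a reduced word `w = x₀ ⋯ xₙ₋₁ ≠ 1` is detected by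
permutations of `{0, …, n}` in which the letter `xₖ` carries `k + 1` to `k`, so that `w`
carries `n` to `0`.
-/

theorem Equiv.Perm.exists_forall_apply_eq_of_rel {α : Type*} [Finite α] (R : α → α → Prop)
    (hfun : ∀ x y y', R x y → R x y' → y = y') (hinj : ∀ x x' y, R x y → R x' y → x = x') :
    ∃ σ : Equiv.Perm α, ∀ x y, R x y → σ x = y := by
  classical
  have := Fintype.ofFinite α
  let f : α → α := fun x => if h : ∃ y, R x y then h.choose else x
  have hf : ∀ x y, R x y → f x = y := fun x y hxy => by
    have h : ∃ y, R x y := ⟨y, hxy⟩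
    simp only [f, dif_pos h]
    exact hfun x _ _ h.choose_spec hxy
  have hinjOn : Set.InjOn f {x | ∃ y, R x y} := by
    rintro x ⟨y, hxy⟩ x' ⟨y', hxy'⟩ hff
    rw [hf x y hxy, hf x' y' hxy'] at hff
    exact hinj x x' y hxy (hff ▸ hxy')
  obtain ⟨g, hg⟩ := Set.MapsTo.exists_equiv_extend_of_card_eq (t := Finset.univ)
    Finset.card_univ.symm (fun _ _ => Finset.mem_coe.mpr (Finset.mem_univ _)) hinjOn
  refine ⟨g.trans (Equiv.subtypeUnivEquiv fun _ => Finset.mem_univ _), fun x y hxy => ?_⟩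
  simpa [hf x y hxy] using hg x ⟨y, hxy⟩

theorem List.prod_map_smul_last_eq {M α β : Type*} [Monoid M] [MulAction M α]
    (L : List β) (g : β → M) (pos : Fin (L.length + 1) → α)
    (h : ∀ k : Fin L.length, g L[k] • pos k.succ = pos k.castSucc) :
    (L.map g).prod • pos (Fin.last _) = pos 0 := by
  induction L with
  | nil => simp
  | cons x L ih =>
    rw [List.map_cons, List.prod_cons, mul_smul]
    exact (congrArg (g x • ·) (ih (fun k => pos k.succ) fun k => h k.succ)).trans (h 0)

theorem MonoidHom.finite_of_fg {G H : Type*} [Group G] [Group H] [Group.FG G] [Finite H] :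
    Finite (G →* H) := by
  obtain ⟨S, hS⟩ := Group.fg_def.mp ‹_›
  refine Finite.of_injective (fun f : G →* H => fun s : S => f s) fun f f' hff => ?_
  exact MonoidHom.eq_of_eqOn_dense hS fun s hs => congrFun hff ⟨s, hs⟩

namespace FreeGroup

variable {α : Type*}

theorem IsReduced.snd_eq_of_fst_eq {L : List (α × Bool)} (hL : IsReduced L) {k : ℕ}
    (hk : k + 1 < L.length) (h : L[k].1 = L[k + 1].1) : L[k].2 = L[k + 1].2 :=
  List.isChain_iff_getElem.mp hL k hk h

/-- Reducedness of `L` is exactly what makes the prescribed moves of the points `0, …, |L|`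
a partial bijection, which then extends to a permutation. -/
theorem IsReduced.exists_perm {L : List (α × Bool)} (hL : IsReduced L) (a : α) :
    ∃ σ : Equiv.Perm (Fin (L.length + 1)), ∀ k : Fin L.length,
      (L[k] = (a, true) → σ k.succ = k.castSucc) ∧ (L[k] = (a, false) → σ k.castSucc = k.succ) := by
  let R : Fin (L.length + 1) → Fin (L.length + 1) → Prop := fun i j => ∃ k, ∃ hk : k < L.length,
    (L[k] = (a, true) ∧ i.val = k + 1 ∧ j.val = k) ∨ (L[k] = (a, false) ∧ i.val = k ∧ j.val = k + 1)
  have no_cancel : ∀ k (hk : k + 1 < L.length) b, L[k] = (a, b) → L[k + 1] ≠ (a, !b) :=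
    fun k hk b h h' => by simpa [h, h'] using hL.snd_eq_of_fst_eq hk (by simp [h, h'])
  obtain ⟨σ, hσ⟩ := Equiv.Perm.exists_forall_apply_eq_of_rel R
    (by
      rintro i j j' ⟨k, hk, ⟨hx, hi, hj⟩ | ⟨hx, hi, hj⟩⟩ ⟨k', hk', ⟨hx', hi', hj'⟩ | ⟨hx', hi', hj'⟩⟩
      · exact Fin.ext (by omega)
      · obtain rfl : k' = k + 1 := by omega
        exact absurd hx' (no_cancel k hk' true hx)
      · obtain rfl : k = k' + 1 := by omega
        exact absurd hx (no_cancel k' hk true hx')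
      · exact Fin.ext (by omega))
    (by
      rintro i i' j ⟨k, hk, ⟨hx, hi, hj⟩ | ⟨hx, hi, hj⟩⟩ ⟨k', hk', ⟨hx', hi', hj'⟩ | ⟨hx', hi', hj'⟩⟩
      · exact Fin.ext (by omega)
      · obtain rfl : k = k' + 1 := by omega
        exact absurd hx (by simpa using no_cancel k' hk false hx')
      · obtain rfl : k' = k + 1 := by omega
        exact absurd hx' (by simpa using no_cancel k hk' false hx)
      · exact Fin.ext (by omega))
  exact ⟨σ, fun k => ⟨fun h => hσ _ _ ⟨k, k.isLt, .inl ⟨h, rfl, rfl⟩⟩,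
    fun h => hσ _ _ ⟨k, k.isLt, .inr ⟨h, rfl, rfl⟩⟩⟩⟩

theorem exists_monoidHom_perm_ne_one {w : FreeGroup α} (hw : w ≠ 1) :
    ∃ n, ∃ π : FreeGroup α →* Equiv.Perm (Fin (n + 1)), π w ≠ 1 := by
  classical
  set L := w.toWord
  choose σ hσ using (isReduced_toWord (x := w)).exists_perm
  refine ⟨L.length, lift σ, fun h => ?_⟩
  have hpath := List.prod_map_smul_last_eq L (fun x => cond x.2 (σ x.1) (σ x.1)⁻¹) id
    fun k => by
      obtain ⟨⟨a, b⟩, hx⟩ : ∃ x, L[k] = x := ⟨_, rfl⟩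
      cases b
      · simp [hx, Equiv.Perm.smul_def, Equiv.symm_apply_eq, (hσ a k).2 hx]
      · simp [hx, Equiv.Perm.smul_def, (hσ a k).1 hx]
  rw [← lift_mk, mk_toWord, h, one_smul] at hpath
  exact hw (toWord_eq_nil_iff.mp (List.eq_nil_of_length_eq_zero (Fin.last_eq_zero_iff.mp hpath)))

instance : Group.ResiduallyFinite (FreeGroup α) :=
  Group.residuallyFinite_iff_exists_finiteIndex.mpr fun _ hw =>
    let ⟨_, π, hπ⟩ := exists_monoidHom_perm_ne_one hw
    ⟨π.ker, Subgroup.finiteIndex_ker π, hπ⟩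

end FreeGroup

theorem MonoidHom.injective_of_surjective_of_residuallyFinite {G : Type*} [Group G] [Group.FG G]
    [Group.ResiduallyFinite G] (f : G →* G) (hf : Function.Surjective f) :
    Function.Injective f := by
  refine (injective_iff_map_eq_one f).mpr fun g hfg => ?_
  by_contra hg
  obtain ⟨H, hgH⟩ := Group.exists_finiteIndexNormalSubgroup_notMem g hg
  have := MonoidHom.finite_of_fg (G := G) (H := G ⧸ H.toSubgroup)
  have hcomp : Function.Injective fun ψ : G →* G ⧸ H.toSubgroup => ψ.comp f :=
    fun _ _ => (MonoidHom.cancel_right hf).mp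
  obtain ⟨ψ, hψ⟩ := Finite.injective_iff_surjective.mp hcomp (QuotientGroup.mk' H.toSubgroup)
  apply hgH
  rw [← FiniteIndexNormalSubgroup.mem_toSubgroup_iff, ← QuotientGroup.eq_one_iff,
    ← QuotientGroup.mk'_apply, ← hψ, MonoidHom.comp_apply, hfg, map_one]

/-- Free groups of finite rank are Hopfian: every surjective endomorphism of a
free group on a finite set is an isomorphism (i.e. bijective). -/
theorem stmt_8 {A : Type*} [Finite A] (φ : FreeGroup A →* FreeGroup A)
    (hφ : Function.Surjective ⇑φ) : Function.Bijective ⇑φ :=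
  ⟨φ.injective_of_surjective_of_residuallyFinite hφ, hφ⟩
end

section
/- Let F_2 be the free group on {a, b} and let u ∈ F_2 be cyclically reduced with reduced expression u = a^{i₀} b^{ε₁} a^{i₁} ⋯ b^{ε_k} a^{i_k}, k ≥ 1, ε_ℓ ∈ {1, −1}. Then for m ≥ 0, the reduced form of φ_{a,ba}ᵐ(u) is a^{j₀} b^{ε₁} a^{j₁} ⋯ b^{ε_k} a^{j_k} where j_ℓ = i_ℓ + m if (ε_ℓ = ε_{ℓ+1} = 1) or (ℓ = k and ε_k = 1); j_ℓ = i_ℓ − m if (ε_ℓ = ε_{ℓ+1} = −1) or (ℓ = 0 and ε₁ = −1); and j_ℓ = i_ℓ otherwise. -/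
/-- The free group on two generators. -/
abbrev F2 := FreeGroup Bool

/-- The generator `a`. -/
def a : F2 := FreeGroup.of false

/-- The generator `b`. -/
def b : F2 := FreeGroup.of true


/-! Since `φᵐ` fixes `a` and sends `b ↦ b aᵐ`, also `b⁻¹ ↦ a⁻ᵐ b⁻¹`: the image of a syllable
`a^i b^{±1}` gains `aᵐ` right after a `b` and loses `aᵐ` right before a `b⁻¹`. Moving each
trailing `aᵐ` into the next syllable gives the exponents `j`. The new word is freely reduced,
since a cancellation could only occur across an empty `a`-block between `b^{ε}` and `b^{-ε}`;
at such a sign change the two shifts of `i` cancel, so `j = i`, and `i = 0` is excluded because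
`u` is reduced. -/

section Transvection

variable {G : Type*} [Group G]

def syllableProd (x y : G) (i ε : ℕ → ℤ) (k : ℕ) : G :=
  ((List.range k).map fun t => x ^ i t * y ^ ε t).prod * x ^ i k

theorem List.prod_range_map_mul_shift (A C : ℕ → G) (hC : C 0 = 1) (k : ℕ) (D : G) :
    ((List.range k).map fun t => A t * C (t + 1)).prod * D =
      ((List.range k).map fun t => C t * A t).prod * (C k * D) := by
  induction k generalizing D with
  | zero => simp [hC]
  | succ k ih =>
    simp only [List.range_succ, List.map_append, List.map_singleton, List.prod_append,
      List.prod_singleton, mul_assoc, ih]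

theorem MulAut.pow_apply_eq_self {Φ : MulAut G} {x : G} (hx : Φ x = x) (n : ℕ) :
    (Φ ^ n) x = x := by
  induction n with
  | zero => rfl
  | succ n ih => rw [pow_succ, MulAut.mul_apply, hx, ih]

theorem MulAut.pow_apply_eq_mul_pow {Φ : MulAut G} {x y : G} (hx : Φ x = x)
    (hy : Φ y = y * x) (n : ℕ) : (Φ ^ n) y = y * x ^ n := by
  induction n with
  | zero => simp
  | succ n ih =>
    rw [pow_succ, MulAut.mul_apply, hy, map_mul, ih, MulAut.pow_apply_eq_self hx, mul_assoc,
      pow_succ]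

variable {F : Type*} [FunLike F G G] [MonoidHomClass F G G]

theorem map_zpow_mul_zpow_sign {f : F} {x y : G} {m : ℤ} (hx : f x = x) (hy : f y = y * x ^ m)
    (i : ℤ) {ε : ℤ} (hε : ε = 1 ∨ ε = -1) :
    f (x ^ i * y ^ ε) =
      x ^ (i - if ε = -1 then m else 0) * y ^ ε * x ^ (if ε = 1 then m else 0) := by
  rcases hε with rfl | rfl <;> simp [hx, hy, zpow_sub, mul_assoc]

theorem map_syllableProd {f : F} {x y : G} {m : ℤ} (hx : f x = x) (hy : f y = y * x ^ m)
    (i : ℕ → ℤ) {ε : ℕ → ℤ} {k : ℕ} (hε : ∀ t < k, ε t = 1 ∨ ε t = -1) :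
    f (syllableProd x y i ε k) = syllableProd x y (fun t => i t
      + (if 1 ≤ t ∧ ε (t - 1) = 1 then m else 0) - (if t < k ∧ ε t = -1 then m else 0)) ε k := by
  set C : ℕ → G := fun t => x ^ (if 1 ≤ t ∧ ε (t - 1) = 1 then m else 0)
  have hsyllable : ∀ t ∈ List.range k, f (x ^ i t * y ^ ε t) =
      x ^ (i t - if ε t = -1 then m else 0) * y ^ ε t * C (t + 1) := fun t ht => by
    simpa [C] using map_zpow_mul_zpow_sign hx hy (i t) (hε t (List.mem_range.mp ht))
  rw [syllableProd, map_mul, map_list_prod, List.map_map, Function.comp_def, map_zpow, hx,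
    List.map_congr_left hsyllable, List.prod_range_map_mul_shift _ C (by simp [C]), syllableProd]
  congr 1
  · refine congrArg List.prod (List.map_congr_left fun t ht => ?_)
    rw [← mul_assoc, ← zpow_add]
    simp only [List.mem_range.mp ht, true_and]
    congr 2
    ring
  · rw [← zpow_add]
    simp only [lt_irrefl, false_and, if_false]
    congr 1
    ring

end Transvection

namespace FreeGroup

variable {α : Type*} [DecidableEq α]

theorem toWord_of_zpow (x : α) (n : ℤ) :
    (of x ^ n).toWord = List.replicate n.natAbs (x, decide (0 ≤ n)) := by
  obtain ⟨n, rfl | rfl⟩ := n.eq_nat_or_neg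
  · simp
  · simp [invRev, List.map_replicate, em]

theorem eq_of_mem_toWord_of_zpow {x : α} {n : ℤ} {p : α × Bool} (hp : p ∈ (of x ^ n).toWord) :
    p = (x, decide (0 ≤ n)) := by
  rw [toWord_of_zpow] at hp
  exact List.eq_of_mem_replicate hp

theorem toWord_of_zpow_ne_nil (x : α) {n : ℤ} (hn : n ≠ 0) : (of x ^ n).toWord ≠ [] := by
  simpa [toWord_of_zpow]

def syllableWord (x y : α) (j ε : ℕ → ℤ) : ℕ → List (α × Bool)
  | 0 => (of x ^ j 0).toWord
  | t + 1 => syllableWord x y j ε t ++ (of y ^ ε t).toWord ++ (of x ^ j (t + 1)).toWord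

variable {x y : α} {j ε : ℕ → ℤ}

theorem mk_syllableWord (k : ℕ) :
    mk (syllableWord x y j ε k) = syllableProd (of x) (of y) j ε k := by
  induction k with
  | zero => simp [syllableWord, syllableProd, mk_toWord]
  | succ k ih =>
    rw [syllableWord, ← mul_mk, ← mul_mk, ih, mk_toWord, mk_toWord, syllableProd, syllableProd,
      List.range_succ, List.map_append, List.prod_append]
    simp [mul_assoc]

theorem length_syllableWord {k : ℕ} (hε : ∀ t < k, ε t = 1 ∨ ε t = -1) :
    (syllableWord x y j ε k).length = ∑ t ∈ Finset.range (k + 1), (j t).natAbs + k := by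
  induction k with
  | zero => simp [syllableWord, toWord_of_zpow]
  | succ k ih =>
    have hεk : (ε k).natAbs = 1 := by rcases hε k k.lt_succ_self with h | h <;> simp [h]
    rw [syllableWord, List.length_append, List.length_append, ih fun t ht => hε t (by omega),
      Finset.sum_range_succ _ (k + 1)]
    simp only [toWord_of_zpow, List.length_replicate, hεk]
    omega

theorem snd_of_mem_getLast?_syllableWord (hxy : x ≠ y) {t : ℕ} (hε : ∀ s < t, ε s ≠ 0)
    (hj : 1 ≤ t → j t = 0 → ε (t - 1) = ε t) {p : α × Bool}
    (hp : p ∈ (syllableWord x y j ε t).getLast?) (hpy : p.1 = y) : p.2 = decide (0 ≤ ε t) := by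
  cases t with
  | zero =>
    rw [eq_of_mem_toWord_of_zpow (List.mem_of_getLast? hp)] at hpy
    exact absurd hpy hxy
  | succ s =>
    by_cases hjt : j (s + 1) = 0
    · rw [syllableWord, hjt, zpow_zero, toWord_one, List.append_nil,
        List.getLast?_append_of_ne_nil _ (toWord_of_zpow_ne_nil y (hε s s.lt_succ_self))] at hp
      rw [eq_of_mem_toWord_of_zpow (List.mem_of_getLast? hp), ← hj (by omega) hjt]
      rfl
    · rw [syllableWord, List.getLast?_append_of_ne_nil _ (toWord_of_zpow_ne_nil x hjt)] at hp
      rw [eq_of_mem_toWord_of_zpow (List.mem_of_getLast? hp)] at hpy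
      exact absurd hpy hxy

theorem isReduced_syllableWord (hxy : x ≠ y) {k : ℕ} (hε : ∀ t < k, ε t ≠ 0)
    (hj : ∀ t, 1 ≤ t → t < k → j t = 0 → ε (t - 1) = ε t) :
    IsReduced (syllableWord x y j ε k) := by
  induction k with
  | zero => exact isReduced_toWord
  | succ k ih =>
    have hεk : ε k ≠ 0 := hε k k.lt_succ_self
    rw [syllableWord, IsReduced, List.isChain_append, List.isChain_append]
    refine ⟨⟨ih (fun t ht => hε t (by omega)) (fun t h1 h2 => hj t h1 (by omega)),
      isReduced_toWord, ?_⟩, isReduced_toWord, ?_⟩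
    · intro p hp q hq hpq
      rw [eq_of_mem_toWord_of_zpow (List.mem_of_mem_head? hq)] at hpq ⊢
      exact snd_of_mem_getLast?_syllableWord hxy (fun t ht => hε t (by omega))
        (fun h1 => hj k h1 k.lt_succ_self) hp hpq
    · intro p hp q hq hpq
      rw [List.getLast?_append_of_ne_nil _ (toWord_of_zpow_ne_nil y hεk)] at hp
      rw [eq_of_mem_toWord_of_zpow (List.mem_of_getLast? hp),
        eq_of_mem_toWord_of_zpow (List.mem_of_mem_head? hq)] at hpq
      exact absurd hpq hxy.symm

theorem norm_syllableProd (hxy : x ≠ y) {k : ℕ} (hε : ∀ t < k, ε t = 1 ∨ ε t = -1)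
    (hj : ∀ t, 1 ≤ t → t < k → j t = 0 → ε (t - 1) = ε t) :
    norm (syllableProd (of x) (of y) j ε k) = ∑ t ∈ Finset.range (k + 1), (j t).natAbs + k := by
  have hε₀ : ∀ t < k, ε t ≠ 0 := fun t ht => by rcases hε t ht with h | h <;> simp [h]
  rw [← mk_syllableWord, norm, toWord_mk, (isReduced_syllableWord hxy hε₀ hj).reduce_eq,
    length_syllableWord hε]

end FreeGroup

theorem stmt_14_general (k : ℕ) (i : ℕ → ℤ) (ε : ℕ → ℤ)
    (hε : ∀ t < k, ε t = 1 ∨ ε t = -1)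
    (u : F2)
    (hu : u = (((List.range k).map fun t => a ^ i t * b ^ ε t).prod) * a ^ i k)
    (hred : ∀ t, 1 ≤ t → t < k → i t = 0 → ε (t - 1) = ε t)
    (Φ : MulAut F2) (hΦa : Φ a = a) (hΦb : Φ b = b * a) (m : ℕ)
    (j : ℕ → ℤ)
    (hj : ∀ t, j t = i t + (if 1 ≤ t ∧ ε (t - 1) = 1 then (m : ℤ) else 0)
        - (if t < k ∧ ε t = -1 then (m : ℤ) else 0)) :
    (Φ ^ m) u = (((List.range k).map fun t => a ^ j t * b ^ ε t).prod) * a ^ j k ∧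
    FreeGroup.norm ((Φ ^ m) u) =
      (∑ t ∈ Finset.range (k + 1), (j t).natAbs) + k := by
  have himage : (Φ ^ m) u = syllableProd a b j ε k := by
    have hΦmb : (Φ ^ m) b = b * a ^ (m : ℤ) := by
      rw [zpow_natCast]; exact MulAut.pow_apply_eq_mul_pow hΦa hΦb m
    rw [hu, funext hj]
    exact map_syllableProd (MulAut.pow_apply_eq_self hΦa m) hΦmb i hε
  have hjred : ∀ t, 1 ≤ t → t < k → j t = 0 → ε (t - 1) = ε t := by
    intro t ht htk hjt
    by_contra hne
    refine hne (hred t ht htk ?_)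
    rw [hj] at hjt
    rcases hε t htk with h | h <;> rcases hε (t - 1) (by omega) with h' | h' <;>
      simp_all
  exact ⟨himage, himage ▸ FreeGroup.norm_syllableProd Bool.false_ne_true hε hjred⟩

/-- Effect of φ_{a,ba}ᵐ on a cyclically reduced word
u = a^{i₀} b^{ε₁} a^{i₁} ⋯ b^{ε_k} a^{i_k}: the reduced form of φ_{a,ba}ᵐ(u) is
a^{j₀} b^{ε₁} ⋯ b^{ε_k} a^{j_k}, where j_ℓ = i_ℓ + m when ε_ℓ = ε_{ℓ+1} = 1 (or
ℓ = k, ε_k = 1), j_ℓ = i_ℓ − m when ε_ℓ = ε_{ℓ+1} = −1 (or ℓ = 0, ε₁ = −1), and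
j_ℓ = i_ℓ otherwise; equivalently j t = i t + m·[t ≥ 1 ∧ ε (t−1) = 1]
− m·[t < k ∧ ε t = −1] (0-indexed ε).  Reducedness of the resulting expression
is stated via the norm identity. -/
theorem stmt_14 (k : ℕ) (hk : 1 ≤ k) (i : ℕ → ℤ) (ε : ℕ → ℤ)
    (hε : ∀ t < k, ε t = 1 ∨ ε t = -1)
    (u : F2)
    (hu : u = (((List.range k).map fun t => a ^ i t * b ^ ε t).prod) * a ^ i k)
    (hred : ∀ t, 1 ≤ t → t < k → i t = 0 → ε (t - 1) = ε t)
    (hcyc : FreeGroup.norm (u * u) = 2 * FreeGroup.norm u)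
    (Φ : MulAut F2) (hΦa : Φ a = a) (hΦb : Φ b = b * a) (m : ℕ)
    (j : ℕ → ℤ)
    (hj : ∀ t, j t = i t + (if 1 ≤ t ∧ ε (t - 1) = 1 then (m : ℤ) else 0)
        - (if t < k ∧ ε t = -1 then (m : ℤ) else 0)) :
    (Φ ^ m) u = (((List.range k).map fun t => a ^ j t * b ^ ε t).prod) * a ^ j k ∧
    FreeGroup.norm ((Φ ^ m) u) =
      (∑ t ∈ Finset.range (k + 1), (j t).natAbs) + k :=
  stmt_14_general k i ε hε u hu hred Φ hΦa hΦb m j hj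
end

section
/- Let F_2 be the free group on {a, b}, and let u ∈ F_2 be cyclically reduced such that its reduced word either starts with b or ends with b⁻¹. Then for every m ≥ 0, φ_{a,ba}ᵐ(u) is cyclically reduced and its reduced word also either starts with b or ends with b⁻¹. -/
/-- An element of the free group is cyclically reduced iff |u²| = 2|u|. -/
def CyclicallyReduced (u : F2) : Prop :=
  FreeGroup.norm (u * u) = 2 * FreeGroup.norm u

/-!
On reduced words, `φ = φ_{a,ba}` replaces `b` by `ba` and `b⁻¹` by `a⁻¹b⁻¹`, and the only
cancellations are the letters `a` absorbed in `b·a⁻¹` and in `a·b⁻¹`; this gives the reduced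
word of `φ(u)` explicitly. From it one reads off that the reduced word of `φ(u)` starts with `b`
iff that of `u` does, and (applying this to `u⁻¹`) ends with `b⁻¹` iff that of `u` does. A
reduced word that starts with `b` is cyclically reduced iff it does not end with `b⁻¹` (and
symmetrically), so both properties pass from `u` to `φ(u)`, and the theorem follows by induction
on `m`.
-/

local notation "𝐚" => ((false, true) : Bool × Bool)
local notation "𝐚⁻" => ((false, false) : Bool × Bool)
local notation "𝐛" => ((true, true) : Bool × Bool)
local notation "𝐛⁻" => ((true, false) : Bool × Bool)

namespace FreeGroup
variable {α : Type*}

theorem mk_cons_true (x : α) (L : List (α × Bool)) : mk ((x, true) :: L) = of x * mk L := by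
  rw [of, mul_mk]; rfl

theorem mk_cons_false (x : α) (L : List (α × Bool)) :
    mk ((x, false) :: L) = (of x)⁻¹ * mk L := by
  rw [of, inv_mk, mul_mk]; rfl

theorem isReduced_append_self_iff {L : List (α × Bool)} :
    IsReduced (L ++ L) ↔ IsCyclicallyReduced L := by
  simp only [IsReduced, List.isChain_append, isCyclicallyReduced_iff, and_self_left]

theorem norm_mul_self_eq_iff [DecidableEq α] (x : FreeGroup α) :
    norm (x * x) = 2 * norm x ↔ IsCyclicallyReduced x.toWord := by
  rw [← isReduced_append_self_iff, isReduced_iff_reduce_eq, norm, norm, toWord_mul, two_mul,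
    ← List.length_append]
  exact ⟨(reduce.red.sublist).eq_of_length, fun h => by rw [h]⟩

theorem head?_invRev_eq_some_iff {L : List (α × Bool)} {x : α × Bool} :
    (invRev L).head? = some x ↔ L.getLast? = some (x.1, !x.2) := by
  rcases h : L.getLast? with _ | ⟨y⟩ <;> simp [invRev, List.head?_reverse, h, Prod.ext_iff]

theorem isCyclicallyReduced_iff_getLast?_ne {L : List (α × Bool)} {x : α × Bool}
    (hL : IsReduced L) (hx : L.head? = some x) :
    IsCyclicallyReduced L ↔ L.getLast? ≠ some (x.1, !x.2) := by
  rcases h : L.getLast? with _ | ⟨y⟩ <;> simp [isCyclicallyReduced_iff, hL, hx, h, Prod.ext_iff]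

theorem isCyclicallyReduced_iff_head?_ne {L : List (α × Bool)} {x : α × Bool}
    (hL : IsReduced L) (hx : L.getLast? = some x) :
    IsCyclicallyReduced L ↔ L.head? ≠ some (x.1, !x.2) := by
  rcases h : L.head? with _ | ⟨y⟩ <;>
    simp [isCyclicallyReduced_iff, hL, hx, h, Prod.ext_iff, eq_comm]

end FreeGroup

open FreeGroup (mk of toWord IsReduced IsCyclicallyReduced mk_cons_true mk_cons_false)

/-- The reduced word of `φ_{a,ba}(w)` for a reduced word `w`. -/
def phiWord : List (Bool × Bool) → List (Bool × Bool)
  | [] => []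
  | 𝐚 :: 𝐛⁻ :: t => 𝐛⁻ :: phiWord t
  | 𝐛 :: 𝐚⁻ :: t => 𝐛 :: phiWord t
  | 𝐚 :: t => 𝐚 :: phiWord t
  | 𝐚⁻ :: t => 𝐚⁻ :: phiWord t
  | 𝐛 :: t => 𝐛 :: 𝐚 :: phiWord t
  | 𝐛⁻ :: t => 𝐚⁻ :: 𝐛⁻ :: phiWord t

theorem mk_phiWord {Φ : MulAut F2} (hΦa : Φ a = a) (hΦb : Φ b = b * a)
    (l : List (Bool × Bool)) : mk (phiWord l) = Φ (mk l) := by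
  replace hΦa : Φ (of false) = of false := hΦa
  replace hΦb : Φ (of true) = of true * of false := hΦb
  induction l using phiWord.induct with
  | case1 => exact (map_one Φ).symm
  | case4 t _ ih | case5 t ih =>
    simp only [phiWord, *, mk_cons_true, mk_cons_false, map_mul, map_inv]
  | case2 t ih | case3 t ih | case6 t _ ih | case7 t ih =>
    simp only [phiWord, *, mk_cons_true, mk_cons_false, map_mul, map_inv]
    group

def phiHead : Bool × Bool → Option (Bool × Bool) → Bool × Bool
  | 𝐚, some 𝐛⁻ => 𝐛⁻
  | 𝐛⁻, _ => 𝐚⁻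
  | x, _ => x

theorem head?_phiWord_cons (x : Bool × Bool) (t : List (Bool × Bool)) :
    (phiWord (x :: t)).head? = some (phiHead x t.head?) := by
  rcases x with ⟨_ | _, _ | _⟩ <;> rcases t with _ | ⟨⟨_ | _, _ | _⟩, t⟩ <;>
    simp [phiWord, phiHead]

theorem isReduced_cons_phiWord_cons {ℓ y : Bool × Bool} {t : List (Bool × Bool)}
    (h : IsReduced (phiWord (y :: t)))
    (hℓ : ∀ n, ℓ.1 = (phiHead y n).1 → ℓ.2 = (phiHead y n).2) :
    IsReduced (ℓ :: phiWord (y :: t)) := by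
  obtain ⟨r, hr⟩ : ∃ r, phiWord (y :: t) = phiHead y t.head? :: r :=
    List.head?_eq_some_iff.1 (head?_phiWord_cons y t)
  rw [hr] at h ⊢
  exact FreeGroup.isReduced_cons_cons.2 ⟨hℓ _, h⟩

theorem isReduced_phiWord {l : List (Bool × Bool)} (hl : IsReduced l) :
    IsReduced (phiWord l) := by
  induction l using phiWord.induct with
  | case1 => exact FreeGroup.IsReduced.nil
  | case2 t ih | case3 t ih =>
    rw [phiWord]
    rcases t with _ | ⟨y, t⟩
    · exact FreeGroup.IsReduced.singleton
    refine isReduced_cons_phiWord_cons (ih hl.tail.tail) fun n => ?_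
    rcases y with ⟨_ | _, _ | _⟩ <;> rcases n with _ | ⟨⟨_ | _, _ | _⟩⟩ <;>
      simp_all [phiHead, FreeGroup.isReduced_cons_cons]
  | case4 t _ ih | case5 t ih =>
    simp only [phiWord, *]
    rcases t with _ | ⟨y, t⟩
    · exact FreeGroup.IsReduced.singleton
    refine isReduced_cons_phiWord_cons (ih hl.tail) fun n => ?_
    rcases y with ⟨_ | _, _ | _⟩ <;> rcases n with _ | ⟨⟨_ | _, _ | _⟩⟩ <;>
      simp_all [phiHead, FreeGroup.isReduced_cons_cons]
  | case6 t _ ih | case7 t ih =>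
    simp only [phiWord, *]
    refine FreeGroup.isReduced_cons_cons.2 ⟨by decide, ?_⟩
    rcases t with _ | ⟨y, t⟩
    · exact FreeGroup.IsReduced.singleton
    refine isReduced_cons_phiWord_cons (ih hl.tail) fun n => ?_
    rcases y with ⟨_ | _, _ | _⟩ <;> rcases n with _ | ⟨⟨_ | _, _ | _⟩⟩ <;>
      simp_all [phiHead, FreeGroup.isReduced_cons_cons]

theorem head?_phiWord_eq_some_b_iff (l : List (Bool × Bool)) :
    (phiWord l).head? = some 𝐛 ↔ l.head? = some 𝐛 := by
  rcases l with _ | ⟨x, t⟩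
  · simp [phiWord]
  rw [head?_phiWord_cons, List.head?_cons, Option.some_inj, Option.some_inj]
  generalize t.head? = n
  revert x n
  decide

theorem toWord_map_eq_phiWord {Φ : MulAut F2} (hΦa : Φ a = a) (hΦb : Φ b = b * a) (g : F2) :
    (Φ g).toWord = phiWord g.toWord := by
  conv_lhs => rw [← FreeGroup.mk_toWord (x := g), ← mk_phiWord hΦa hΦb, FreeGroup.toWord_mk]
  exact (isReduced_phiWord FreeGroup.isReduced_toWord).reduce_eq

theorem head?_toWord_map_eq_some_b_iff {Φ : MulAut F2} (hΦa : Φ a = a) (hΦb : Φ b = b * a)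
    (g : F2) : (Φ g).toWord.head? = some 𝐛 ↔ g.toWord.head? = some 𝐛 := by
  rw [toWord_map_eq_phiWord hΦa hΦb, head?_phiWord_eq_some_b_iff]

theorem getLast?_toWord_map_eq_some_bInv_iff {Φ : MulAut F2} (hΦa : Φ a = a)
    (hΦb : Φ b = b * a) (g : F2) :
    (Φ g).toWord.getLast? = some 𝐛⁻ ↔ g.toWord.getLast? = some 𝐛⁻ := by
  simpa only [map_inv, FreeGroup.toWord_inv, FreeGroup.head?_invRev_eq_some_iff,
    Bool.not_true] using
    head?_toWord_map_eq_some_b_iff hΦa hΦb g⁻¹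

theorem cyclicallyReduced_map_iff {Φ : MulAut F2} (hΦa : Φ a = a) (hΦb : Φ b = b * a) {u : F2}
    (hu : u.toWord.head? = some 𝐛 ∨ u.toWord.getLast? = some 𝐛⁻) :
    CyclicallyReduced (Φ u) ↔ CyclicallyReduced u := by
  simp only [CyclicallyReduced, FreeGroup.norm_mul_self_eq_iff]
  rcases hu with h | h
  · rw [FreeGroup.isCyclicallyReduced_iff_getLast?_ne FreeGroup.isReduced_toWord h,
      FreeGroup.isCyclicallyReduced_iff_getLast?_ne FreeGroup.isReduced_toWord
        ((head?_toWord_map_eq_some_b_iff hΦa hΦb u).2 h)]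
    exact (getLast?_toWord_map_eq_some_bInv_iff hΦa hΦb u).not
  · rw [FreeGroup.isCyclicallyReduced_iff_head?_ne FreeGroup.isReduced_toWord h,
      FreeGroup.isCyclicallyReduced_iff_head?_ne FreeGroup.isReduced_toWord
        ((getLast?_toWord_map_eq_some_bInv_iff hΦa hΦb u).2 h)]
    exact (head?_toWord_map_eq_some_b_iff hΦa hΦb u).not

/-- If u is cyclically reduced and its reduced word starts with b or ends with
b⁻¹, then for every m ≥ 0 so does φ_{a,ba}ᵐ(u).  (In `toWord`, the letter b is
`(true, true)` and b⁻¹ is `(true, false)`.) -/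
theorem stmt_15 (u : F2) (hcyc : CyclicallyReduced u)
    (hsb : u.toWord.head? = some (true, true) ∨
           u.toWord.getLast? = some (true, false))
    (Φ : MulAut F2) (hΦa : Φ a = a) (hΦb : Φ b = b * a) (m : ℕ) :
    CyclicallyReduced ((Φ ^ m) u) ∧
    (((Φ ^ m) u).toWord.head? = some (true, true) ∨
     ((Φ ^ m) u).toWord.getLast? = some (true, false)) := by
  induction m generalizing u with
  | zero => exact ⟨hcyc, hsb⟩
  | succ n ih =>
    rw [pow_succ, MulAut.mul_apply]
    refine ih (Φ u) ((cyclicallyReduced_map_iff hΦa hΦb hsb).2 hcyc) ?_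
    rwa [head?_toWord_map_eq_some_b_iff hΦa hΦb, getLast?_toWord_map_eq_some_bInv_iff hΦa hΦb]
end
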